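/- arXiv:1710.06133 — 6 statements merged into one kernel-verified Lean document; each statement's English description precedes it below -/
import Mathlib

section
/- A positively homogeneous function p : ℝⁿ → ℝ is upper semicontinuous on ℝⁿ if and only if there exists a nonempty family Φ of real-valued sublinear functions on ℝⁿ such that p(x) = inf_{φ∈Φ} φ(x) for all x ∈ ℝⁿ. -/
/-!
Upper semicontinuity and compactness of the unit sphere bound a positively homogeneous `p` by
`M ‖x‖`. If `u` is a unit vector and `p u < A`, then `p < A` on a neighbourhood of `u` in the
sphere, and the sublinear cone `x ↦ C ‖x‖ + (A - C) ⟪u, x⟫` equals `A` at `u`, is at least `A`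
on the sphere, and for large `C` exceeds `M` on the sphere away from `u`; by homogeneity it
majorises `p`. Hence `p` is the infimum of its sublinear majorants. Conversely, sublinear
functions on `ℝⁿ` are continuous, and an infimum of continuous functions is upper
semicontinuous.
-/

open Set
open scoped RealInnerProductSpace

def IsPosHomogeneous {E : Type*} [SMul ℝ E] (f : E → ℝ) : Prop :=
  ∀ (x : E) (l : ℝ), 0 < l → f (l • x) = l * f x

lemma norm_inv_norm_smul {E : Type*} [NormedAddCommGroup E] [NormedSpace ℝ E] {x : E}
    (hx : x ≠ 0) : ‖‖x‖⁻¹ • x‖ = 1 := by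
  simpa using norm_smul_inv_norm (𝕜 := ℝ) hx

lemma isPosHomogeneous_norm {E : Type*} [NormedAddCommGroup E] [NormedSpace ℝ E] :
    IsPosHomogeneous fun x : E => ‖x‖ := by
  intro x l hl
  simp only [norm_smul, Real.norm_of_nonneg hl.le]

namespace IsPosHomogeneous

section Module

variable {E : Type*} [AddCommGroup E] [Module ℝ E] {f g : E → ℝ}

lemma map_zero (hf : IsPosHomogeneous f) : f 0 = 0 := by
  have h := hf 0 2 two_pos
  rw [smul_zero] at h
  linarith

lemma const_mul (hf : IsPosHomogeneous f) (c : ℝ) : IsPosHomogeneous fun x => c * f x := by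
  intro x l hl
  simp only [hf x l hl]
  ring

lemma add (hf : IsPosHomogeneous f) (hg : IsPosHomogeneous g) : IsPosHomogeneous (f + g) := by
  intro x l hl
  simp only [Pi.add_apply, hf x l hl, hg x l hl, mul_add]

end Module

variable {E : Type*} [NormedAddCommGroup E] [NormedSpace ℝ E] {f g : E → ℝ}

lemma eq_norm_mul (hf : IsPosHomogeneous f) (x : E) : f x = ‖x‖ * f (‖x‖⁻¹ • x) := by
  rcases eq_or_ne x 0 with rfl | hx
  · simp [hf.map_zero]
  · have hx' : 0 < ‖x‖ := norm_pos_iff.2 hx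
    rw [← hf _ _ hx', smul_inv_smul₀ hx'.ne']

lemma le_of_forall_norm_eq_one_le (hf : IsPosHomogeneous f) (hg : IsPosHomogeneous g)
    (h : ∀ z, ‖z‖ = 1 → f z ≤ g z) : f ≤ g := by
  intro x
  rcases eq_or_ne x 0 with rfl | hx
  · rw [hf.map_zero, hg.map_zero]
  · rw [hf.eq_norm_mul, hg.eq_norm_mul]
    exact mul_le_mul_of_nonneg_left (h _ (norm_inv_norm_smul hx)) (norm_nonneg _)

lemma exists_le_mul_norm [ProperSpace E] (hf : IsPosHomogeneous f)
    (husc : UpperSemicontinuous f) : ∃ M, 0 ≤ M ∧ ∀ x, f x ≤ M * ‖x‖ := by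
  obtain ⟨M, hM⟩ :=
    (husc.upperSemicontinuousOn _).bddAbove_of_isCompact (isCompact_sphere (0 : E) 1)
  refine ⟨max M 0, le_max_right _ _,
    hf.le_of_forall_norm_eq_one_le (isPosHomogeneous_norm.const_mul _) fun z hz => ?_⟩
  rw [hz, mul_one]
  exact (hM (mem_image_of_mem f (mem_sphere_zero_iff_norm.2 hz))).trans (le_max_left _ _)

end IsPosHomogeneous

section Cone

variable {E : Type*} [NormedAddCommGroup E] [InnerProductSpace ℝ E]

lemma isPosHomogeneous_norm_add_inner (C : ℝ) (v : E) :
    IsPosHomogeneous fun x : E => C * ‖x‖ + ⟪v, x⟫ := by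
  refine (isPosHomogeneous_norm.const_mul C).add fun x l _ => ?_
  exact real_inner_smul_right v x l

lemma convexOn_norm_add_inner {C : ℝ} (hC : 0 ≤ C) (v : E) :
    ConvexOn ℝ univ fun x : E => C * ‖x‖ + ⟪v, x⟫ :=
  (convexOn_univ_norm.smul hC).add ((innerSL ℝ v).toLinearMap.convexOn convex_univ)

lemma norm_sub_sq_eq_two_mul_one_sub_inner {u z : E} (hu : ‖u‖ = 1) (hz : ‖z‖ = 1) :
    ‖z - u‖ ^ 2 = 2 * (1 - ⟪z, u⟫) := by
  rw [norm_sub_sq_real, hu, hz]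
  ring

end Cone

section Majorant

variable {E : Type*} [NormedAddCommGroup E] [InnerProductSpace ℝ E] [ProperSpace E]
  {p : E → ℝ}

lemma exists_sublinear_majorant_eq_of_lt (hp : IsPosHomogeneous p)
    (husc : UpperSemicontinuous p) {u : E} (hu : ‖u‖ = 1) {A : ℝ} (hA : p u < A) :
    ∃ φ : E → ℝ, IsPosHomogeneous φ ∧ ConvexOn ℝ univ φ ∧ p ≤ φ ∧ φ u = A := by
  obtain ⟨M, hM0, hM⟩ := hp.exists_le_mul_norm husc
  obtain ⟨δ, hδ, hnear⟩ := Metric.eventually_nhds_iff.1 (husc u A hA)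
  set C := max A (2 * (M + |A|) / δ ^ 2)
  have hCA : A ≤ C := le_max_left _ _
  have hC : 0 ≤ C := (by positivity : 0 ≤ 2 * (M + |A|) / δ ^ 2).trans (le_max_right _ _)
  have hCδ : 2 * (M + |A|) ≤ C * δ ^ 2 := (div_le_iff₀ (by positivity)).1 (le_max_right _ _)
  refine ⟨fun x => C * ‖x‖ + ⟪(A - C) • u, x⟫, isPosHomogeneous_norm_add_inner _ _,
    convexOn_norm_add_inner hC _, hp.le_of_forall_norm_eq_one_le
      (isPosHomogeneous_norm_add_inner _ _) fun z hz => ?_, ?_⟩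
  · have ht : |⟪z, u⟫| ≤ 1 := by simpa [hz, hu] using abs_real_inner_le_norm z u
    have hsq := norm_sub_sq_eq_two_mul_one_sub_inner hu hz
    rw [real_inner_smul_left, real_inner_comm, hz]
    rcases lt_or_ge (dist z u) δ with hzu | hzu
    · have := mul_nonneg (sub_nonneg.2 hCA) (sub_nonneg.2 (abs_le.1 ht).2)
      linarith [hnear hzu]
    · -- away from `u` the term `C (1 - ⟪z, u⟫) ≥ C δ² / 2` dominates `M + |A|`
      have hδz : δ ^ 2 ≤ ‖z - u‖ ^ 2 := by
        rw [← dist_eq_norm]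
        exact pow_le_pow_left₀ hδ.le hzu 2
      have hAt : -|A| ≤ A * ⟪z, u⟫ :=
        (abs_le.1 (by rw [abs_mul]; exact mul_le_of_le_one_right (abs_nonneg A) ht)).1
      have hpz := hM z
      rw [hz, mul_one] at hpz
      rw [hsq] at hδz
      linarith [mul_le_mul_of_nonneg_left hδz hC]
  · simp [real_inner_smul_left, hu]

lemma exists_sublinear_majorant_le_add (hp : IsPosHomogeneous p)
    (husc : UpperSemicontinuous p) (x : E) {ε : ℝ} (hε : 0 < ε) :
    ∃ φ : E → ℝ, IsPosHomogeneous φ ∧ ConvexOn ℝ univ φ ∧ p ≤ φ ∧ φ x ≤ p x + ε := by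
  rcases eq_or_ne x 0 with rfl | hx
  · obtain ⟨M, hM0, hM⟩ := hp.exists_le_mul_norm husc
    refine ⟨fun x => M * ‖x‖, isPosHomogeneous_norm.const_mul M,
      by simpa only [smul_eq_mul] using convexOn_univ_norm.smul hM0, hM, ?_⟩
    simp [hp.map_zero, hε.le]
  · have hx' : 0 < ‖x‖ := norm_pos_iff.2 hx
    obtain ⟨φ, hφ, hφc, hpφ, hφu⟩ := exists_sublinear_majorant_eq_of_lt hp husc
      (norm_inv_norm_smul hx) (lt_add_of_pos_right (p (‖x‖⁻¹ • x)) (div_pos hε hx'))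
    refine ⟨φ, hφ, hφc, hpφ, le_of_eq ?_⟩
    rw [hφ.eq_norm_mul, hφu, hp.eq_norm_mul x]
    field_simp

end Majorant

theorem stmt_8 {n : ℕ} (p : EuclideanSpace ℝ (Fin n) → ℝ)
    (hph : ∀ (x : EuclideanSpace ℝ (Fin n)) (l : ℝ), 0 < l → p (l • x) = l * p x) :
    UpperSemicontinuous p ↔
      ∃ Φ : Set (EuclideanSpace ℝ (Fin n) → ℝ), Φ.Nonempty ∧
        (∀ φ ∈ Φ, (∀ (x : EuclideanSpace ℝ (Fin n)) (l : ℝ), 0 < l → φ (l • x) = l * φ x)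
          ∧ ConvexOn ℝ Set.univ φ) ∧
        (∀ x : EuclideanSpace ℝ (Fin n), BddBelow (Set.range fun φ : Φ => φ.1 x)) ∧
        (∀ x, p x = ⨅ φ : Φ, φ.1 x) := by
  constructor
  · intro husc
    set Φ := {φ | IsPosHomogeneous φ ∧ ConvexOn ℝ univ φ ∧ p ≤ φ}
    have hbdd (x) : BddBelow (range fun φ : Φ => φ.1 x) := ⟨p x, by
      rintro _ ⟨φ, rfl⟩
      exact φ.2.2.2 x⟩
    obtain ⟨φ₀, hφ₀, hφ₀c, hpφ₀, -⟩ := exists_sublinear_majorant_le_add hph husc 0 one_pos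
    have : Nonempty Φ := ⟨⟨φ₀, hφ₀, hφ₀c, hpφ₀⟩⟩
    refine ⟨Φ, ⟨φ₀, hφ₀, hφ₀c, hpφ₀⟩, fun φ hφ => ⟨hφ.1, hφ.2.1⟩, hbdd, fun x =>
      le_antisymm (le_ciInf fun φ => φ.2.2.2 x) (le_of_forall_pos_le_add fun ε hε => ?_)⟩
    obtain ⟨φ, hφ, hφc, hpφ, hφx⟩ := exists_sublinear_majorant_le_add hph husc x hε
    exact (ciInf_le (hbdd x) ⟨φ, hφ, hφc, hpφ⟩).trans hφx
  · rintro ⟨Φ, -, hΦ, hbdd, hinf⟩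
    rw [show p = fun x => ⨅ φ : Φ, φ.1 x from funext hinf]
    exact upperSemicontinuous_ciInf hbdd fun φ =>
      (hΦ φ.1 φ.2).2.locallyLipschitz.continuous.upperSemicontinuous
end

section
/- A positively homogeneous function p : ℝⁿ → ℝ is lower semicontinuous on ℝⁿ if and only if there exists a nonempty family Ψ of real-valued superlinear functions on ℝⁿ such that p(x) = sup_{ψ∈Ψ} ψ(x) for all x ∈ ℝⁿ. -/
/-!
A supremum of superlinear functions is lower semicontinuous, because concave functions on `ℝⁿ`
are continuous. Conversely, take `Ψ` to be all superlinear minorants of `p`. By homogeneity it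
suffices, for a unit vector `u` and `c < p u`, to find `ψ ∈ Ψ` with `c ≤ ψ u`. Lower
semicontinuity gives `p > c` on a ball `B(u, ε)`, and compactness gives `p ≥ m` on the unit
sphere. Then `ψ y = A ⟪u, y⟫ - (A - c) ‖y‖` works for large `A`: on the sphere
`ψ y = c - A ‖y - u‖² / 2`, which is at most `c` inside the ball and at most `m` outside it.
-/

open Set Metric RealInnerProductSpace

def PosHomogeneous {E : Type*} [SMul ℝ E] (f : E → ℝ) : Prop :=
  ∀ (x : E) (l : ℝ), 0 < l → f (l • x) = l * f x

def IsSuperlinear {E : Type*} [AddCommGroup E] [Module ℝ E] (f : E → ℝ) : Prop :=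
  PosHomogeneous f ∧ ConcaveOn ℝ univ f

section NormedSpace

variable {E : Type*} [NormedAddCommGroup E]

theorem LowerSemicontinuous.exists_forall_norm_eq_one_le [ProperSpace E] {p : E → ℝ}
    (hp : LowerSemicontinuous p) : ∃ m, ∀ u, ‖u‖ = 1 → m ≤ p u := by
  obtain ⟨m, hm⟩ :=
    (hp.lowerSemicontinuousOn _).bddBelow_of_isCompact (isCompact_sphere (0 : E) 1)
  exact ⟨m, fun u hu => hm ⟨u, mem_sphere_zero_iff_norm.2 hu, rfl⟩⟩

variable [NormedSpace ℝ E] {f g : E → ℝ}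

theorem PosHomogeneous.map_zero (hf : PosHomogeneous f) : f 0 = 0 := by
  have h := hf 0 2 two_pos
  rw [smul_zero] at h
  linarith

theorem PosHomogeneous.apply_eq_norm_mul (hf : PosHomogeneous f) {x : E} (hx : x ≠ 0) :
    f x = ‖x‖ * f (‖x‖⁻¹ • x) := by
  rw [← hf _ _ (norm_pos_iff.2 hx), smul_inv_smul₀ (norm_ne_zero_iff.2 hx)]

theorem PosHomogeneous.le_of_forall_norm_eq_one_le (hf : PosHomogeneous f)
    (hg : PosHomogeneous g) (h : ∀ u, ‖u‖ = 1 → f u ≤ g u) (x : E) : f x ≤ g x := by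
  rcases eq_or_ne x 0 with rfl | hx
  · rw [hf.map_zero, hg.map_zero]
  · rw [hf.apply_eq_norm_mul hx, hg.apply_eq_norm_mul hx]
    exact mul_le_mul_of_nonneg_left (h _ (norm_smul_inv_norm hx)) (norm_nonneg x)

theorem IsSuperlinear.continuous [FiniteDimensional ℝ E] (hf : IsSuperlinear f) :
    Continuous f :=
  continuousOn_univ.1 (hf.2.continuousOn isOpen_univ)

end NormedSpace

section InnerProductSpace

variable {E : Type*} [NormedAddCommGroup E] [InnerProductSpace ℝ E]

theorem isSuperlinear_inner_sub_mul_norm (v : E) {b : ℝ} (hb : 0 ≤ b) :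
    IsSuperlinear fun y => ⟪v, y⟫ - b * ‖y‖ := by
  refine ⟨fun y l hl => ?_, ?_⟩
  · simp only [real_inner_smul_right, norm_smul, Real.norm_of_nonneg hl.le]
    ring
  · exact ((innerₗ E v).concaveOn convex_univ).sub ((convexOn_norm convex_univ).smul hb)

variable [ProperSpace E] {p : E → ℝ}

theorem exists_superlinear_le (hp : PosHomogeneous p) (hlsc : LowerSemicontinuous p) :
    ∃ ψ, IsSuperlinear ψ ∧ ∀ x, ψ x ≤ p x := by
  obtain ⟨m, hm⟩ := hlsc.exists_forall_norm_eq_one_le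
  have hψ := isSuperlinear_inner_sub_mul_norm (0 : E) (neg_nonneg.2 (min_le_right m 0))
  refine ⟨_, hψ, hψ.1.le_of_forall_norm_eq_one_le hp fun u hu => ?_⟩
  simpa [hu] using (min_le_left m 0).trans (hm u hu)

theorem exists_superlinear_le_of_lt_of_norm_eq_one (hp : PosHomogeneous p)
    (hlsc : LowerSemicontinuous p) {u : E} (hu : ‖u‖ = 1) {c : ℝ} (hc : c < p u) :
    ∃ ψ, IsSuperlinear ψ ∧ (∀ x, ψ x ≤ p x) ∧ c ≤ ψ u := by
  obtain ⟨ε, hε, hball⟩ : ∃ ε > 0, ∀ y, dist y u < ε → c < p y :=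
    Metric.eventually_nhds_iff.1 (hlsc u c hc)
  obtain ⟨m, hm⟩ := hlsc.exists_forall_norm_eq_one_le
  obtain ⟨A, hA0, hcA, hmA⟩ : ∃ A, 0 ≤ A ∧ c ≤ A ∧ c - m ≤ A * (ε ^ 2 / 2) :=
    ⟨max (max 0 c) ((c - m) / (ε ^ 2 / 2)), by positivity, by simp,
      by rw [← div_le_iff₀ (by positivity)]; exact le_max_right _ _⟩
  have hψ := isSuperlinear_inner_sub_mul_norm (A • u) (sub_nonneg.2 hcA)
  refine ⟨_, hψ, hψ.1.le_of_forall_norm_eq_one_le hp fun y hy => ?_, ?_⟩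
  · have hdist : dist y u ^ 2 = 2 * (1 - ⟪u, y⟫) := by
      rw [dist_eq_norm, norm_sub_sq_real, hy, hu, real_inner_comm]; ring
    have hinner : ⟪u, y⟫ ≤ 1 := by simpa [hu, hy] using real_inner_le_norm u y
    rw [real_inner_smul_left, hy]
    rcases lt_or_ge (dist y u) ε with hyu | hyu
    · nlinarith [hball y hyu]
    · nlinarith [hm y hy, pow_le_pow_left₀ hε.le hyu 2]
  · rw [real_inner_smul_left, real_inner_self_eq_norm_sq, hu]
    simp

theorem exists_superlinear_le_of_lt (hp : PosHomogeneous p) (hlsc : LowerSemicontinuous p)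
    {x : E} {c : ℝ} (hc : c < p x) : ∃ ψ, IsSuperlinear ψ ∧ (∀ y, ψ y ≤ p y) ∧ c ≤ ψ x := by
  rcases eq_or_ne x 0 with rfl | hx
  · obtain ⟨ψ, hψ, hψp⟩ := exists_superlinear_le hp hlsc
    rw [hp.map_zero] at hc
    exact ⟨ψ, hψ, hψp, hψ.1.map_zero ▸ hc.le⟩
  · have hx' := norm_pos_iff.2 hx
    rw [hp.apply_eq_norm_mul hx, ← div_lt_iff₀' hx'] at hc
    obtain ⟨ψ, hψ, hψp, hcψ⟩ :=
      exists_superlinear_le_of_lt_of_norm_eq_one hp hlsc (norm_smul_inv_norm hx) hc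
    refine ⟨ψ, hψ, hψp, ?_⟩
    rwa [hψ.1.apply_eq_norm_mul hx, ← div_le_iff₀' hx']

end InnerProductSpace

theorem stmt_9 {n : ℕ} (p : EuclideanSpace ℝ (Fin n) → ℝ)
    (hph : ∀ (x : EuclideanSpace ℝ (Fin n)) (l : ℝ), 0 < l → p (l • x) = l * p x) :
    LowerSemicontinuous p ↔
      ∃ Ψ : Set (EuclideanSpace ℝ (Fin n) → ℝ), Ψ.Nonempty ∧
        (∀ ψ ∈ Ψ, (∀ (x : EuclideanSpace ℝ (Fin n)) (l : ℝ), 0 < l → ψ (l • x) = l * ψ x)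
          ∧ ConcaveOn ℝ Set.univ ψ) ∧
        (∀ x : EuclideanSpace ℝ (Fin n), BddAbove (Set.range fun ψ : Ψ => ψ.1 x)) ∧
        (∀ x, p x = ⨆ ψ : Ψ, ψ.1 x) := by
  constructor
  · intro hlsc
    obtain ⟨ψ₀, hψ₀, hψ₀p⟩ := exists_superlinear_le hph hlsc
    let Ψ := {ψ | IsSuperlinear ψ ∧ ∀ x, ψ x ≤ p x}
    have : Nonempty Ψ := ⟨⟨ψ₀, hψ₀, hψ₀p⟩⟩
    refine ⟨Ψ, ⟨ψ₀, hψ₀, hψ₀p⟩, fun ψ hψ => hψ.1, fun x => ⟨p x, ?_⟩, fun x => ?_⟩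
    · rintro _ ⟨ψ, rfl⟩
      exact ψ.2.2 x
    refine (ciSup_eq_of_forall_le_of_forall_lt_exists_gt (fun ψ => ψ.2.2 x) fun w hw => ?_).symm
    obtain ⟨c, hwc, hc⟩ := exists_between hw
    obtain ⟨ψ, hψ, hψp, hcψ⟩ := exists_superlinear_le_of_lt hph hlsc hc
    exact ⟨⟨ψ, hψ, hψp⟩, hwc.trans_le hcψ⟩
  · rintro ⟨Ψ, -, hΨ, hbdd, hsup⟩
    rw [show p = fun x => ⨆ ψ : Ψ, ψ.1 x from funext hsup]
    exact lowerSemicontinuous_ciSup hbdd fun ψ =>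
      (IsSuperlinear.continuous (hΨ ψ.1 ψ.2)).lowerSemicontinuous
end

section
/- Let p : ℝⁿ → ℝ be continuous and positively homogeneous, and suppose p = inf_{i∈I} φ_i with each φ_i sublinear and p = sup_{s∈S} ψ_s with each ψ_s superlinear. Then for each (i,s) one can choose a_{is} ∈ ℝⁿ with ψ_s ≤ ⟨a_{is},·⟩ ≤ φ_i pointwise, and any such choice satisfies p(x) = inf_{i∈I} sup_{s∈S} ⟨a_{is},x⟩ = sup_{s∈S} inf_{i∈I} ⟨a_{is},x⟩ for all x ∈ ℝⁿ. -/
/-!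
Since `ψ s ≤ p ≤ φ i`, the sandwich theorem (Hahn–Banach applied to the sublinear function
`(x, y) ↦ φ i x - ψ s y` on `ℝⁿ × ℝⁿ`, starting from the zero functional on the diagonal) gives a
linear functional `⟪a i s, ·⟫` between `ψ s` and `φ i`. Then for every `i`,
`p x = ⨆ s, ψ s x ≤ ⨆ s, ⟪a i s, x⟫ ≤ φ i x`, and taking the infimum over `i` squeezes the
min-max value to `p x`; the max-min value is handled symmetrically.
-/

open Set
open scoped RealInnerProductSpace

section Sublinear

variable {E : Type*} [AddCommGroup E] [Module ℝ E]

theorem map_zero_of_posHomog {f : E → ℝ} (hhom : ∀ (x : E) (l : ℝ), 0 < l → f (l • x) = l * f x) :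
    f 0 = 0 := by
  have h := hhom 0 2 two_pos
  rw [smul_zero] at h
  linarith

theorem ConvexOn.map_add_le_of_posHomog {f : E → ℝ} (hconv : ConvexOn ℝ univ f)
    (hhom : ∀ (x : E) (l : ℝ), 0 < l → f (l • x) = l * f x) (x y : E) :
    f (x + y) ≤ f x + f y := by
  have hmid := hconv.2 (mem_univ x) (mem_univ y) (by norm_num : (0 : ℝ) ≤ 1 / 2)
    (by norm_num : (0 : ℝ) ≤ 1 / 2) (by norm_num)
  have hdouble : (2 : ℝ) • ((1 / 2 : ℝ) • x + (1 / 2 : ℝ) • y) = x + y := by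
    rw [smul_add, smul_smul, smul_smul]; norm_num
  rw [← hdouble, hhom _ 2 two_pos]
  simp only [smul_eq_mul] at hmid
  linarith

theorem ConcaveOn.add_le_map_add_of_posHomog {f : E → ℝ} (hconc : ConcaveOn ℝ univ f)
    (hhom : ∀ (x : E) (l : ℝ), 0 < l → f (l • x) = l * f x) (x y : E) :
    f x + f y ≤ f (x + y) := by
  have h := hconc.neg.map_add_le_of_posHomog (fun x l hl => by simp [hhom x l hl]) x y
  simp only [Pi.neg_apply] at h
  linarith

theorem exists_linearMap_between {φ ψ : E → ℝ}
    (hφ_hom : ∀ (x : E) (l : ℝ), 0 < l → φ (l • x) = l * φ x)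
    (hφ_add : ∀ x y, φ (x + y) ≤ φ x + φ y)
    (hψ_hom : ∀ (x : E) (l : ℝ), 0 < l → ψ (l • x) = l * ψ x)
    (hψ_add : ∀ x y, ψ x + ψ y ≤ ψ (x + y)) (hle : ∀ x, ψ x ≤ φ x) :
    ∃ g : E →ₗ[ℝ] ℝ, ∀ x, ψ x ≤ g x ∧ g x ≤ φ x := by
  -- An extension `G ≤ N` vanishing on the diagonal has the form `G (x, y) = g x - g y`.
  let N : E × E → ℝ := fun z => φ z.1 - ψ z.2
  let diagonal : Submodule ℝ (E × E) := LinearMap.ker (LinearMap.fst ℝ E E - LinearMap.snd ℝ E E)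
  obtain ⟨G, hG_diag, hG_le⟩ := exists_extension_of_le_sublinear ⟨diagonal, 0⟩ N
    (fun l hl z => by
      simp only [N, Prod.smul_fst, Prod.smul_snd, hφ_hom _ _ hl, hψ_hom _ _ hl]; ring)
    (fun z w => by
      simp only [N, Prod.fst_add, Prod.snd_add]; linarith [hφ_add z.1 w.1, hψ_add z.2 w.2])
    (fun ⟨z, hz⟩ => by
      have hz_diag : z.1 = z.2 := sub_eq_zero.mp hz
      simpa [N, hz_diag] using hle z.2)
  have hG_anti : ∀ x, G (0, x) = -G (x, 0) := fun x => by
    have h : G (x, x) = 0 := hG_diag ⟨(x, x), sub_self x⟩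
    rw [show ((x, x) : E × E) = (x, 0) + (0, x) by simp, map_add] at h
    linarith
  refine ⟨G.comp (LinearMap.inl ℝ E E), fun x => ⟨?_, ?_⟩⟩
  · have h := hG_le (0, x)
    simp only [N, hG_anti, map_zero_of_posHomog hφ_hom] at h
    simpa using h
  · simpa [N, map_zero_of_posHomog hψ_hom] using hG_le (x, 0)

end Sublinear

theorem exists_inner_between {F : Type*} [NormedAddCommGroup F] [InnerProductSpace ℝ F]
    [FiniteDimensional ℝ F] {φ ψ : F → ℝ}
    (hφ_hom : ∀ (x : F) (l : ℝ), 0 < l → φ (l • x) = l * φ x) (hφ : ConvexOn ℝ univ φ)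
    (hψ_hom : ∀ (x : F) (l : ℝ), 0 < l → ψ (l • x) = l * ψ x) (hψ : ConcaveOn ℝ univ ψ)
    (hle : ∀ x, ψ x ≤ φ x) :
    ∃ a : F, ∀ x, ψ x ≤ ⟪a, x⟫ ∧ ⟪a, x⟫ ≤ φ x := by
  obtain ⟨g, hg⟩ := exists_linearMap_between hφ_hom (hφ.map_add_le_of_posHomog hφ_hom) hψ_hom
    (hψ.add_le_map_add_of_posHomog hψ_hom) hle
  refine ⟨(InnerProductSpace.toDual ℝ F).symm (LinearMap.toContinuousLinearMap g), fun x => ?_⟩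
  rw [InnerProductSpace.toDual_symm_apply]
  exact hg x

section Minimax

variable {α ι κ : Type*} [ConditionallyCompleteLattice α] [Nonempty ι] [Nonempty κ]
  {u : ι → α} {v : κ → α} {f : ι → κ → α}

theorem ciInf_ciSup_eq_of_between (huv : ⨅ i, u i = ⨆ k, v k)
    (hf : ∀ i k, v k ≤ f i k ∧ f i k ≤ u i) :
    ⨅ i, ⨆ k, f i k = ⨅ i, u i := by
  have hbdd : ∀ i, BddAbove (range (f i)) :=
    fun i => ⟨u i, by rintro _ ⟨k, rfl⟩; exact (hf i k).2⟩
  have hlower : ∀ i, ⨅ i, u i ≤ ⨆ k, f i k :=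
    fun i => huv ▸ ciSup_mono (hbdd i) fun k => (hf i k).1
  have hbddBelow : BddBelow (range fun i => ⨆ k, f i k) :=
    ⟨⨅ i, u i, by rintro _ ⟨i, rfl⟩; exact hlower i⟩
  exact le_antisymm (ciInf_mono hbddBelow fun i => ciSup_le fun k => (hf i k).2) (le_ciInf hlower)

theorem ciSup_ciInf_eq_of_between (huv : ⨅ i, u i = ⨆ k, v k)
    (hf : ∀ i k, v k ≤ f i k ∧ f i k ≤ u i) :
    ⨆ k, ⨅ i, f i k = ⨆ k, v k :=
  ciInf_ciSup_eq_of_between (α := αᵒᵈ) (u := v) (v := u) (f := fun k i => f i k) huv.symm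
    fun k i => (hf i k).symm

end Minimax

theorem stmt_11_general {n : ℕ} {I S : Type} [Nonempty I] [Nonempty S]
    (p : EuclideanSpace ℝ (Fin n) → ℝ)
    (φ : I → EuclideanSpace ℝ (Fin n) → ℝ)
    (hφ : ∀ i, (∀ (x : EuclideanSpace ℝ (Fin n)) (l : ℝ), 0 < l → φ i (l • x) = l * φ i x)
      ∧ ConvexOn ℝ Set.univ (φ i))
    (ψ : S → EuclideanSpace ℝ (Fin n) → ℝ)
    (hψ : ∀ s, (∀ (x : EuclideanSpace ℝ (Fin n)) (l : ℝ), 0 < l → ψ s (l • x) = l * ψ s x)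
      ∧ ConcaveOn ℝ Set.univ (ψ s))
    (hbddI : ∀ x, BddBelow (Set.range fun i : I => φ i x))
    (hbddS : ∀ x, BddAbove (Set.range fun s : S => ψ s x))
    (hinf : ∀ x, p x = ⨅ i : I, φ i x)
    (hsup : ∀ x, p x = ⨆ s : S, ψ s x) :
    (∃ a : I → S → EuclideanSpace ℝ (Fin n),
      ∀ (i : I) (s : S) (x : EuclideanSpace ℝ (Fin n)),
        ψ s x ≤ (inner ℝ (a i s) x : ℝ) ∧ (inner ℝ (a i s) x : ℝ) ≤ φ i x) ∧
    (∀ a : I → S → EuclideanSpace ℝ (Fin n),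
      (∀ (i : I) (s : S) (x : EuclideanSpace ℝ (Fin n)),
        ψ s x ≤ (inner ℝ (a i s) x : ℝ) ∧ (inner ℝ (a i s) x : ℝ) ≤ φ i x) →
      ∀ x : EuclideanSpace ℝ (Fin n),
        (p x = ⨅ i : I, ⨆ s : S, (inner ℝ (a i s) x : ℝ)) ∧
        (p x = ⨆ s : S, ⨅ i : I, (inner ℝ (a i s) x : ℝ))) := by
  have hψ_le_φ : ∀ i s x, ψ s x ≤ φ i x := fun i s x =>
    calc ψ s x ≤ p x := hsup x ▸ le_ciSup (hbddS x) s
      _ ≤ φ i x := hinf x ▸ ciInf_le (hbddI x) i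
  refine ⟨?_, fun a ha x => ?_⟩
  · choose a ha using fun i s =>
      exists_inner_between (hφ i).1 (hφ i).2 (hψ s).1 (hψ s).2 (hψ_le_φ i s)
    exact ⟨a, ha⟩
  · have hinf_eq_sup : ⨅ i, φ i x = ⨆ s, ψ s x := (hinf x).symm.trans (hsup x)
    exact ⟨(hinf x).trans (ciInf_ciSup_eq_of_between hinf_eq_sup (fun i s => ha i s x)).symm,
      (hsup x).trans (ciSup_ciInf_eq_of_between hinf_eq_sup (fun i s => ha i s x)).symm⟩

theorem stmt_11 {n : ℕ} {I S : Type} [Nonempty I] [Nonempty S]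
    (p : EuclideanSpace ℝ (Fin n) → ℝ)
    (hph : ∀ (x : EuclideanSpace ℝ (Fin n)) (l : ℝ), 0 < l → p (l • x) = l * p x)
    (hcont : Continuous p)
    (φ : I → EuclideanSpace ℝ (Fin n) → ℝ)
    (hφ : ∀ i, (∀ (x : EuclideanSpace ℝ (Fin n)) (l : ℝ), 0 < l → φ i (l • x) = l * φ i x)
      ∧ ConvexOn ℝ Set.univ (φ i))
    (ψ : S → EuclideanSpace ℝ (Fin n) → ℝ)
    (hψ : ∀ s, (∀ (x : EuclideanSpace ℝ (Fin n)) (l : ℝ), 0 < l → ψ s (l • x) = l * ψ s x)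
      ∧ ConcaveOn ℝ Set.univ (ψ s))
    (hbddI : ∀ x, BddBelow (Set.range fun i : I => φ i x))
    (hbddS : ∀ x, BddAbove (Set.range fun s : S => ψ s x))
    (hinf : ∀ x, p x = ⨅ i : I, φ i x)
    (hsup : ∀ x, p x = ⨆ s : S, ψ s x) :
    (∃ a : I → S → EuclideanSpace ℝ (Fin n),
      ∀ (i : I) (s : S) (x : EuclideanSpace ℝ (Fin n)),
        ψ s x ≤ (inner ℝ (a i s) x : ℝ) ∧ (inner ℝ (a i s) x : ℝ) ≤ φ i x) ∧
    (∀ a : I → S → EuclideanSpace ℝ (Fin n),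
      (∀ (i : I) (s : S) (x : EuclideanSpace ℝ (Fin n)),
        ψ s x ≤ (inner ℝ (a i s) x : ℝ) ∧ (inner ℝ (a i s) x : ℝ) ≤ φ i x) →
      ∀ x : EuclideanSpace ℝ (Fin n),
        (p x = ⨅ i : I, ⨆ s : S, (inner ℝ (a i s) x : ℝ)) ∧
        (p x = ⨆ s : S, ⨅ i : I, (inner ℝ (a i s) x : ℝ))) :=
  stmt_11_general p φ hφ ψ hψ hbddI hbddS hinf hsup
end

section
/- A function p : ℝⁿ → ℝ is positively homogeneous and Lipschitz continuous on ℝⁿ if and only if there exist M > 0 and a two-index family {a_{is} ∈ ℝⁿ : i∈I, s∈S} satisfying, for every x ∈ ℝⁿ: -M‖x‖ < inf_{i∈I} ⟨a_{is},x⟩ for all s ∈ S and sup_{s∈S} ⟨a_{is},x⟩ < M‖x‖ for all i ∈ I (for x ≠ 0), together with p(x) = inf_{i∈I} sup_{s∈S} ⟨a_{is},x⟩ = sup_{s∈S} inf_{i∈I} ⟨a_{is},x⟩. -/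
/-!
The inf-sup of a family of linear functionals of norm at most `M` is positively homogeneous and
`M`-Lipschitz. Conversely, let `p` be positively homogeneous and `K`-Lipschitz. For any two points
`y, x`, a theorem of the alternative in `ℝ²` gives `u` with `‖u‖ ≤ K`, `p y ≤ ⟪u, y⟫` and
`⟪u, x⟫ ≤ p x`. Take for `I` the selections `y ↦ u_y` with `‖u_y‖ ≤ K` and `p y ≤ ⟪u_y, y⟫`, and
for `S` the points. Fix `x` and choose the `u_y` so that `⟪u_y, x⟫ ≤ p x` for every `y`. That
selection and the point `x` form a saddle point of `(f, y) ↦ ⟪f y, x⟫` with value `p x`, so the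
inf-sup and the sup-inf both equal `p x`.
-/

open Set
open scoped NNReal RealInnerProductSpace

theorem LipschitzWith.ciSup {α ι : Type*} [PseudoMetricSpace α] [Nonempty ι] {K : ℝ≥0}
    {g : ι → α → ℝ} (hg : ∀ i, LipschitzWith K (g i))
    (hbdd : ∀ x, BddAbove (range fun i => g i x)) :
    LipschitzWith K fun x => ⨆ i, g i x :=
  LipschitzWith.of_le_add_mul K fun x y =>
    ciSup_le fun i => ((hg i).le_add_mul x y).trans (by gcongr; exact le_ciSup (hbdd y) i)

theorem LipschitzWith.ciInf {α ι : Type*} [PseudoMetricSpace α] [Nonempty ι] {K : ℝ≥0}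
    {g : ι → α → ℝ} (hg : ∀ i, LipschitzWith K (g i))
    (hbdd : ∀ x, BddBelow (range fun i => g i x)) :
    LipschitzWith K fun x => ⨅ i, g i x :=
  LipschitzWith.of_le_add_mul K fun x y => by
    rw [← sub_le_iff_le_add]
    exact le_ciInf fun i => sub_le_iff_le_add.2 <|
      (ciInf_le (hbdd x) i).trans ((hg i).le_add_mul x y)

section Saddle

variable {α ι κ : Type*} [ConditionallyCompleteLattice α] {φ : ι → κ → α} {i₀ : ι} {j₀ : κ} {c : α}

theorem ciInf_ciSup_eq_of_saddle [Nonempty ι] [Nonempty κ] (hrow : ∀ i, BddAbove (range (φ i)))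
    (hi₀ : ∀ j, φ i₀ j ≤ c) (hj₀ : ∀ i, c ≤ φ i j₀) :
    ⨅ i, ⨆ j, φ i j = c := by
  have hc : ∀ i, c ≤ ⨆ j, φ i j := fun i => (hj₀ i).trans (le_ciSup (hrow i) j₀)
  exact le_antisymm ((ciInf_le ⟨c, forall_mem_range.2 hc⟩ i₀).trans (ciSup_le hi₀)) (le_ciInf hc)

theorem ciSup_ciInf_eq_of_saddle [Nonempty ι] [Nonempty κ]
    (hcol : ∀ j, BddBelow (range fun i => φ i j))
    (hi₀ : ∀ j, φ i₀ j ≤ c) (hj₀ : ∀ i, c ≤ φ i j₀) :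
    ⨆ j, ⨅ i, φ i j = c := by
  have hc : ∀ j, ⨅ i, φ i j ≤ c := fun j => (ciInf_le (hcol j) i₀).trans (hi₀ j)
  exact le_antisymm (ciSup_le hc) ((le_ciInf hj₀).trans (le_ciSup ⟨c, forall_mem_range.2 hc⟩ j₀))

end Saddle

theorem exists_mem_ge_of_forall_nonneg_weights {A : Set (ℝ × ℝ)} (hconv : Convex ℝ A)
    (hcomp : IsCompact A) {z : ℝ × ℝ}
    (h : ∀ α β : ℝ, 0 ≤ α → 0 ≤ β → ∃ a ∈ A, α * z.1 + β * z.2 ≤ α * a.1 + β * a.2) :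
    ∃ a ∈ A, z ≤ a := by
  by_contra hne
  have hdisj : Disjoint A (Ici z) :=
    Set.disjoint_left.2 fun a ha hza => hne ⟨a, ha, hza⟩
  obtain ⟨f, c, d, hA, hcd, hz⟩ :=
    geometric_hahn_banach_compact_closed hconv hcomp (convex_Ici z) isClosed_Ici hdisj
  have hf : ∀ b : ℝ × ℝ, f b = f (1, 0) * b.1 + f (0, 1) * b.2 := fun b => by
    conv_lhs => rw [show b = b.1 • ((1 : ℝ), (0 : ℝ)) + b.2 • ((0 : ℝ), (1 : ℝ)) by ext <;> simp]
    rw [map_add, map_smul, map_smul, smul_eq_mul, smul_eq_mul, mul_comm, mul_comm b.2]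
  -- `d < f` on the cone `Ici z`, so `f` cannot decrease along a direction `e ≥ 0`.
  have hnonneg : ∀ e : ℝ × ℝ, 0 ≤ e → 0 ≤ f e := fun e he => by
    by_contra! hfe
    have hzd : d < f z := hz z self_mem_Ici
    have := hz (z + ((f z - d) / -f e) • e) (le_add_of_nonneg_right (smul_nonneg
      (div_nonneg (sub_nonneg.2 hzd.le) (neg_nonneg.2 hfe.le)) he))
    rw [map_add, map_smul, smul_eq_mul, div_mul_eq_mul_div, div_neg, mul_div_cancel_right₀ _ hfe.ne]
      at this
    linarith
  obtain ⟨a, ha, hza⟩ :=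
    h _ _ (hnonneg (1, 0) (by simp [Prod.le_def])) (hnonneg (0, 1) (by simp [Prod.le_def]))
  have := hz z self_mem_Ici
  linarith [hA a ha, hf a, hf z]

section InnerProductSpace

variable {E : Type*} [NormedAddCommGroup E] [InnerProductSpace ℝ E]

theorem exists_norm_le_inner_eq (w : E) {r : ℝ} (hr : 0 ≤ r) :
    ∃ u : E, ‖u‖ ≤ r ∧ ⟪w, u⟫ = r * ‖w‖ := by
  rcases eq_or_ne w 0 with rfl | hw
  · exact ⟨0, by simpa using hr, by simp⟩
  · have hw' : ‖w‖ ≠ 0 := norm_ne_zero_iff.2 hw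
    refine ⟨(r / ‖w‖) • w, ?_, ?_⟩
    · rw [norm_smul, Real.norm_of_nonneg (by positivity), div_mul_cancel₀ _ hw']
    · rw [real_inner_smul_right, real_inner_self_eq_norm_sq]
      field_simp

theorem lipschitzWith_inner {v : E} {K : ℝ≥0} (hv : ‖v‖ ≤ K) : LipschitzWith K fun x => ⟪v, x⟫ :=
  LipschitzWith.of_dist_le_mul fun x y => by
    rw [Real.dist_eq, ← inner_sub_right, dist_eq_norm]
    exact (abs_real_inner_le_norm v (x - y)).trans (by gcongr)

section Family

variable {ι : Type*} {a : ι → E} {K : ℝ}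

theorem abs_inner_le_of_norm_le (ha : ∀ i, ‖a i‖ ≤ K) (i : ι) (x : E) : |⟪a i, x⟫| ≤ K * ‖x‖ :=
  (abs_real_inner_le_norm _ _).trans (by gcongr; exact ha i)

theorem bddAbove_range_inner (ha : ∀ i, ‖a i‖ ≤ K) (x : E) : BddAbove (range fun i => ⟪a i, x⟫) :=
  ⟨K * ‖x‖, forall_mem_range.2 fun i => (abs_le.1 (abs_inner_le_of_norm_le ha i x)).2⟩

theorem bddBelow_range_inner (ha : ∀ i, ‖a i‖ ≤ K) (x : E) : BddBelow (range fun i => ⟪a i, x⟫) :=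
  ⟨-(K * ‖x‖), forall_mem_range.2 fun i => (abs_le.1 (abs_inner_le_of_norm_le ha i x)).1⟩

theorem ciSup_inner_le [Nonempty ι] (ha : ∀ i, ‖a i‖ ≤ K) (x : E) : ⨆ i, ⟪a i, x⟫ ≤ K * ‖x‖ :=
  ciSup_le fun i => (abs_le.1 (abs_inner_le_of_norm_le ha i x)).2

theorem neg_mul_le_ciInf_inner [Nonempty ι] (ha : ∀ i, ‖a i‖ ≤ K) (x : E) :
    -(K * ‖x‖) ≤ ⨅ i, ⟪a i, x⟫ :=
  le_ciInf fun i => (abs_le.1 (abs_inner_le_of_norm_le ha i x)).1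

theorem norm_le_of_ciSup_inner_lt (hbdd : ∀ x, BddAbove (range fun i => ⟪a i, x⟫))
    (hlt : ∀ x ≠ 0, ⨆ i, ⟪a i, x⟫ < K * ‖x‖) (hK : 0 ≤ K) (i : ι) : ‖a i‖ ≤ K := by
  rcases eq_or_ne (a i) 0 with hai | hai
  · simpa [hai] using hK
  · have h := (le_ciSup (hbdd (a i)) i).trans_lt (hlt (a i) hai)
    rw [real_inner_self_eq_norm_sq, sq] at h
    exact (lt_of_mul_lt_mul_right h (norm_nonneg _)).le

end Family

variable {ι κ : Type*}

theorem iInf_iSup_inner_smul (a : ι → κ → E) {l : ℝ} (hl : 0 ≤ l) (x : E) :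
    ⨅ i, ⨆ s, ⟪a i s, l • x⟫ = l * ⨅ i, ⨆ s, ⟪a i s, x⟫ := by
  simp_rw [real_inner_smul_right, Real.mul_iInf_of_nonneg hl, Real.mul_iSup_of_nonneg hl]

theorem lipschitzWith_iInf_iSup_inner [Nonempty ι] [Nonempty κ] {a : ι → κ → E} {K : ℝ≥0}
    (ha : ∀ i s, ‖a i s‖ ≤ K) : LipschitzWith K fun x => ⨅ i, ⨆ s, ⟪a i s, x⟫ := by
  refine LipschitzWith.ciInf (fun i => LipschitzWith.ciSup (fun s => lipschitzWith_inner (ha i s))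
    (bddAbove_range_inner (ha i))) fun x => ⟨-(K * ‖x‖), forall_mem_range.2 fun i => ?_⟩
  obtain ⟨s⟩ : Nonempty κ := inferInstance
  exact (abs_le.1 (abs_inner_le_of_norm_le (ha i) s x)).1.trans
    (le_ciSup (bddAbove_range_inner (ha i) x) s)

end InnerProductSpace

section PositivelyHomogeneous

variable {E : Type*} [NormedAddCommGroup E] {p : E → ℝ}

theorem apply_smul_of_nonneg [Module ℝ E] (hp : ∀ x (l : ℝ), 0 < l → p (l • x) = l * p x)
    {l : ℝ} (hl : 0 ≤ l) (x : E) : p (l • x) = l * p x := by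
  rcases hl.eq_or_lt with rfl | hl
  · have h := hp 0 2 two_pos
    rw [smul_zero] at h
    rw [zero_smul, zero_mul]
    linarith
  · exact hp x l hl

variable [InnerProductSpace ℝ E] {K : ℝ≥0}

/-- If no such `u` existed, separating the image of the ball from the corner `Ici (p y, -p x)`
in `ℝ × ℝ` would give `α, β ≥ 0` with `K * ‖α • y - β • x‖ < α * p y - β * p x = p (α • y) - p (β • x)`. -/
theorem exists_norm_le_le_inner_inner_le [ProperSpace E]
    (hhom : ∀ x (l : ℝ), 0 ≤ l → p (l • x) = l * p x) (hlip : LipschitzWith K p) (y x : E) :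
    ∃ u : E, ‖u‖ ≤ K ∧ p y ≤ ⟪u, y⟫ ∧ ⟪u, x⟫ ≤ p x := by
  let T : E →L[ℝ] ℝ × ℝ := (innerSL ℝ y).prod (-innerSL ℝ x)
  obtain ⟨_, ⟨u, hu, rfl⟩, hle⟩ := exists_mem_ge_of_forall_nonneg_weights
    ((convex_closedBall 0 K).linear_image T.toLinearMap) ((isCompact_closedBall 0 K).image T.cont)
    (z := (p y, -p x)) fun α β hα hβ => by
      obtain ⟨u, hu, huw⟩ := exists_norm_le_inner_eq (α • y - β • x) K.coe_nonneg
      refine ⟨T u, mem_image_of_mem T (mem_closedBall_zero_iff.2 hu), ?_⟩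
      have hlip' := hlip.le_add_mul (α • y) (β • x)
      rw [hhom y α hα, hhom x β hβ, dist_eq_norm] at hlip'
      rw [inner_sub_left, real_inner_smul_left, real_inner_smul_left] at huw
      simp only [T, ContinuousLinearMap.prod_apply, neg_apply, innerSL_apply_apply]
      linarith
  refine ⟨u, mem_closedBall_zero_iff.1 hu, ?_, ?_⟩
  · simpa [T, real_inner_comm] using hle.1
  · simpa [T, real_inner_comm] using hle.2

def dominatingSelections (p : E → ℝ) (K : ℝ) : Set (E → E) :=
  {f | ∀ y, ‖f y‖ ≤ K ∧ p y ≤ ⟪f y, y⟫}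

theorem exists_mem_dominatingSelections_inner_le [ProperSpace E]
    (hhom : ∀ x (l : ℝ), 0 ≤ l → p (l • x) = l * p x) (hlip : LipschitzWith K p) (x : E) :
    ∃ f ∈ dominatingSelections p K, ∀ y, ⟪f y, x⟫ ≤ p x := by
  choose u hu using fun y => exists_norm_le_le_inner_inner_le hhom hlip y x
  exact ⟨u, fun y => ⟨(hu y).1, (hu y).2.1⟩, fun y => (hu y).2.2⟩

end PositivelyHomogeneous

theorem stmt_13 {n : ℕ} (p : EuclideanSpace ℝ (Fin n) → ℝ) :
    ((∀ (x : EuclideanSpace ℝ (Fin n)) (l : ℝ), 0 < l → p (l • x) = l * p x) ∧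
      ∃ K : NNReal, LipschitzWith K p)
    ↔
    ∃ M : ℝ, 0 < M ∧
      ∃ (I S : Type) (_ : Nonempty I) (_ : Nonempty S)
        (a : I → S → EuclideanSpace ℝ (Fin n)),
        (∀ (x : EuclideanSpace ℝ (Fin n)) (s : S),
          BddBelow (Set.range fun i : I => (inner ℝ (a i s) x : ℝ))) ∧
        (∀ (x : EuclideanSpace ℝ (Fin n)) (i : I),
          BddAbove (Set.range fun s : S => (inner ℝ (a i s) x : ℝ))) ∧
        (∀ x : EuclideanSpace ℝ (Fin n), x ≠ 0 →
          (∀ s : S, -M * ‖x‖ < ⨅ i : I, (inner ℝ (a i s) x : ℝ)) ∧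
          (∀ i : I, (⨆ s : S, (inner ℝ (a i s) x : ℝ)) < M * ‖x‖)) ∧
        (∀ x : EuclideanSpace ℝ (Fin n),
          (p x = ⨅ i : I, ⨆ s : S, (inner ℝ (a i s) x : ℝ)) ∧
          (p x = ⨆ s : S, ⨅ i : I, (inner ℝ (a i s) x : ℝ))) := by
  constructor
  · rintro ⟨hhom, K, hlip⟩
    have hsel := exists_mem_dominatingSelections_inner_le
      (fun x l hl => apply_smul_of_nonneg hhom hl x) hlip
    have : Nonempty (dominatingSelections p K) := let ⟨f, hf, _⟩ := hsel 0; ⟨⟨f, hf⟩⟩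
    have hK : ∀ (f : dominatingSelections p K) y, ‖f.1 y‖ ≤ K := fun f y => (f.2 y).1
    refine ⟨K + 1, by positivity, dominatingSelections p K, _, inferInstance, ⟨0⟩,
      fun f y => f.1 y, fun x y => bddBelow_range_inner (hK · y) x,
      fun x f => bddAbove_range_inner (hK f) x, fun x hx => ⟨fun y => ?_, fun f => ?_⟩,
      fun x => ?_⟩
    · have := norm_pos_iff.2 hx
      exact lt_of_lt_of_le (by nlinarith) (neg_mul_le_ciInf_inner (hK · y) x)
    · have := norm_pos_iff.2 hx
      exact lt_of_le_of_lt (ciSup_inner_le (hK f) x) (by nlinarith)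
    · obtain ⟨g, hg, hgx⟩ := hsel x
      have hdom : ∀ f : dominatingSelections p K, p x ≤ ⟪f.1 x, x⟫ := fun f => (f.2 x).2
      exact ⟨(ciInf_ciSup_eq_of_saddle (fun f => bddAbove_range_inner (hK f) x)
          (i₀ := ⟨g, hg⟩) hgx hdom).symm,
        (ciSup_ciInf_eq_of_saddle (fun y => bddBelow_range_inner (hK · y) x)
          (i₀ := ⟨g, hg⟩) hgx hdom).symm⟩
  · rintro ⟨M, hM, I, S, _, _, a, -, hbdd, hlt, hrep⟩
    have hM' : ∀ i s, ‖a i s‖ ≤ M.toNNReal := fun i s =>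
      (norm_le_of_ciSup_inner_lt (hbdd · i) (fun x hx => (hlt x hx).2 i) hM.le s).trans
        (Real.le_coe_toNNReal M)
    obtain rfl : p = fun x => ⨅ i, ⨆ s, ⟪a i s, x⟫ := funext fun x => (hrep x).1
    exact ⟨fun x l hl => iInf_iSup_inner_smul a hl.le x, _, lipschitzWith_iInf_iSup_inner hM'⟩
end

section
/- A function p : ℝⁿ → ℝ is difference sublinear (i.e. a difference of two real-valued sublinear functions) if and only if there exist two bounded families of vectors {b_s : s∈S} and {c_i : i∈I} in ℝⁿ such that, with a_{is} := b_s − c_i, one has p(x) = inf_{i∈I} sup_{s∈S} ⟨a_{is},x⟩ = sup_{s∈S} inf_{i∈I} ⟨a_{is},x⟩ for all x ∈ ℝⁿ. -/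
/-!
A sublinear `φ` on a finite-dimensional inner product space is the supremum of its linear
minorants `x ↦ ⟪v, x⟫`: the Hahn–Banach theorem yields a minorant touching `φ` at any given point,
and the minorant vectors `v` form a bounded set because the convex function `φ` is continuous,
hence bounded on the unit ball. So a difference of sublinear functions is `σ_b - σ_c` for support
functions of bounded families `b`, `c`; as `t ↦ t - a` preserves suprema and `t ↦ a - t` turns
them into infima, `σ_b x - σ_c x = ⨅ i, ⨆ s, ⟪b s - c i, x⟫ = ⨆ s, ⨅ i, ⟪b s - c i, x⟫`.
-/

open Set Bornology Metric
open scoped RealInnerProductSpace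

lemma Real.sub_ciSup {ι : Type*} [Nonempty ι] {f : ι → ℝ} (hf : BddAbove (range f)) (a : ℝ) :
    a - ⨆ i, f i = ⨅ i, (a - f i) :=
  Antitone.map_ciSup_of_continuousAt (continuous_const.sub continuous_id).continuousAt
    (fun _ _ h => sub_le_sub_left h a) hf

section Sublinear

variable {V : Type*} [AddCommGroup V] [Module ℝ V] {φ : V → ℝ}

lemma map_zero_of_posHomogeneous (hom : ∀ (x : V) (l : ℝ), 0 < l → φ (l • x) = l * φ x) :
    φ 0 = 0 := by
  have h := hom 0 2 two_pos
  rw [smul_zero] at h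
  linarith

lemma map_add_le_of_posHomogeneous (hom : ∀ (x : V) (l : ℝ), 0 < l → φ (l • x) = l * φ x)
    (hconv : ConvexOn ℝ univ φ) (x y : V) : φ (x + y) ≤ φ x + φ y := by
  have h := hconv.2 (mem_univ x) (mem_univ y) (by norm_num : (0 : ℝ) ≤ 1 / 2)
    (by norm_num : (0 : ℝ) ≤ 1 / 2) (by norm_num)
  rw [← smul_add, hom _ _ (by norm_num), smul_eq_mul, smul_eq_mul] at h
  linarith

lemma mul_le_map_smul_of_posHomogeneous (hom : ∀ (x : V) (l : ℝ), 0 < l → φ (l • x) = l * φ x)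
    (hconv : ConvexOn ℝ univ φ) (t : ℝ) (x : V) : t * φ x ≤ φ (t • x) := by
  rcases lt_trichotomy t 0 with ht | rfl | ht
  · have h := map_add_le_of_posHomogeneous hom hconv (t • x) ((-t) • x)
    rw [← add_smul, add_neg_cancel, zero_smul, map_zero_of_posHomogeneous hom,
      hom x (-t) (neg_pos.2 ht)] at h
    linarith
  · simp [map_zero_of_posHomogeneous hom]
  · rw [hom x t ht]

lemma exists_linearMap_le_eq_of_posHomogeneous
    (hom : ∀ (x : V) (l : ℝ), 0 < l → φ (l • x) = l * φ x) (hconv : ConvexOn ℝ univ φ)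
    (x₀ : V) : ∃ g : V →ₗ[ℝ] ℝ, (∀ x, g x ≤ φ x) ∧ g x₀ = φ x₀ := by
  have hker : ∀ c : ℝ, c • x₀ = 0 → c • φ x₀ = 0 := fun c hc => by
    rcases smul_eq_zero.1 hc with rfl | rfl <;> simp [map_zero_of_posHomogeneous hom]
  set f := LinearPMap.mkSpanSingleton' (σ := RingHom.id ℝ) x₀ (φ x₀) hker
  have hf : ∀ x : f.domain, f x ≤ φ x := by
    rintro ⟨_, hx⟩
    obtain ⟨t, rfl⟩ := Submodule.mem_span_singleton.1 hx
    rw [LinearPMap.mkSpanSingleton'_apply]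
    exact mul_le_map_smul_of_posHomogeneous hom hconv t x₀
  obtain ⟨g, hgf, hgφ⟩ := exists_extension_of_le_sublinear f φ (fun c hc x => hom x c hc)
    (map_add_le_of_posHomogeneous hom hconv) hf
  exact ⟨g, hgφ, (hgf ⟨x₀, Submodule.mem_span_singleton_self x₀⟩).trans
    (LinearPMap.mkSpanSingleton'_apply_self _ _ _ _)⟩

end Sublinear

section InnerProduct

variable {E : Type*} [NormedAddCommGroup E] [InnerProductSpace ℝ E]

noncomputable def supportFun {S : Type*} (b : S → E) (x : E) : ℝ := ⨆ s, ⟪b s, x⟫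

def linearMinorants (φ : E → ℝ) : Set E := {v | ∀ x, ⟪v, x⟫ ≤ φ x}

lemma norm_le_of_forall_inner_le {v : E} {C : ℝ} (h : ∀ x, ‖x‖ ≤ 1 → ⟪v, x⟫ ≤ C) :
    ‖v‖ ≤ C := by
  rcases eq_or_ne v 0 with rfl | hv
  · simpa using h 0 (by simp)
  · have hv' : 0 < ‖v‖ := norm_pos_iff.2 hv
    calc ‖v‖ = ⟪v, ‖v‖⁻¹ • v⟫ := by
          rw [real_inner_smul_right, real_inner_self_eq_norm_sq]; field_simp
      _ ≤ C := h _ (by rw [norm_smul, norm_inv, norm_norm, inv_mul_cancel₀ hv'.ne'])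

section Families

variable {S I : Type*} {b : S → E} {c : I → E}

lemma bddAbove_range_inner_s15 (hb : IsBounded (range b)) (x : E) :
    BddAbove (range fun s => ⟪b s, x⟫) := by
  obtain ⟨M, hM⟩ := hb.exists_norm_le
  refine ⟨M * ‖x‖, ?_⟩
  rintro _ ⟨s, rfl⟩
  exact (real_inner_le_norm _ _).trans
    (mul_le_mul_of_nonneg_right (hM _ (mem_range_self s)) (norm_nonneg x))

lemma supportFun_smul (b : S → E) {l : ℝ} (hl : 0 < l) (x : E) :
    supportFun b (l • x) = l * supportFun b x := by
  simp only [supportFun, real_inner_smul_right, Real.mul_iSup_of_nonneg hl.le]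

lemma convexOn_supportFun [Nonempty S] (hb : IsBounded (range b)) :
    ConvexOn ℝ univ (supportFun b) :=
  ⟨convex_univ, fun x _ y _ a a' _ _ _ => ciSup_le fun s => by
    rw [inner_add_right, real_inner_smul_right, real_inner_smul_right, smul_eq_mul, smul_eq_mul]
    gcongr <;> exact le_ciSup (bddAbove_range_inner_s15 hb _) s⟩

variable [Nonempty S] [Nonempty I]

lemma iInf_iSup_inner_sub (hb : IsBounded (range b)) (hc : IsBounded (range c)) (x : E) :
    ⨅ i, ⨆ s, ⟪b s - c i, x⟫ = supportFun b x - supportFun c x := by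
  simp_rw [inner_sub_left, ← ciSup_sub (bddAbove_range_inner_s15 hb x)]
  exact (Real.sub_ciSup (bddAbove_range_inner_s15 hc x) _).symm

lemma iSup_iInf_inner_sub (hb : IsBounded (range b)) (hc : IsBounded (range c)) (x : E) :
    ⨆ s, ⨅ i, ⟪b s - c i, x⟫ = supportFun b x - supportFun c x := by
  simp_rw [inner_sub_left, ← Real.sub_ciSup (bddAbove_range_inner_s15 hc x)]
  exact (ciSup_sub (bddAbove_range_inner_s15 hb x) _).symm

end Families

variable [FiniteDimensional ℝ E] {φ : E → ℝ}

lemma exists_mem_linearMinorants_inner_eq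
    (hom : ∀ (x : E) (l : ℝ), 0 < l → φ (l • x) = l * φ x) (hconv : ConvexOn ℝ univ φ)
    (x₀ : E) : ∃ v ∈ linearMinorants φ, ⟪v, x₀⟫ = φ x₀ := by
  obtain ⟨g, hgφ, hgx₀⟩ := exists_linearMap_le_eq_of_posHomogeneous hom hconv x₀
  refine ⟨(InnerProductSpace.toDual ℝ E).symm (LinearMap.toContinuousLinearMap g),
    fun x => ?_, ?_⟩
  · simpa [InnerProductSpace.toDual_symm_apply] using hgφ x
  · simpa [InnerProductSpace.toDual_symm_apply] using hgx₀

lemma isBounded_linearMinorants (hconv : ConvexOn ℝ univ φ) : IsBounded (linearMinorants φ) := by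
  obtain ⟨C, hC⟩ := ((isCompact_closedBall (0 : E) 1).image_of_continuousOn
    ((hconv.continuousOn isOpen_univ).mono (subset_univ _))).bddAbove
  exact isBounded_iff_forall_norm_le.2 ⟨C, fun v hv => norm_le_of_forall_inner_le fun x hx =>
    (hv x).trans (hC ⟨x, by simpa using hx, rfl⟩)⟩

lemma supportFun_linearMinorants (hom : ∀ (x : E) (l : ℝ), 0 < l → φ (l • x) = l * φ x)
    (hconv : ConvexOn ℝ univ φ) : supportFun ((↑) : linearMinorants φ → E) = φ := by
  funext x
  obtain ⟨v, hv, hvx⟩ := exists_mem_linearMinorants_inner_eq hom hconv x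
  have : Nonempty (linearMinorants φ) := ⟨⟨v, hv⟩⟩
  refine le_antisymm (ciSup_le fun w => w.2 x) ?_
  exact hvx ▸ le_ciSup (f := fun w : linearMinorants φ => ⟪(w : E), x⟫)
    ⟨φ x, by rintro _ ⟨w, rfl⟩; exact w.2 x⟩ ⟨v, hv⟩

end InnerProduct

theorem stmt_15 {n : ℕ} (p : EuclideanSpace ℝ (Fin n) → ℝ) :
    (∃ φ₁ φ₂ : EuclideanSpace ℝ (Fin n) → ℝ,
      (∀ (x : EuclideanSpace ℝ (Fin n)) (l : ℝ), 0 < l → φ₁ (l • x) = l * φ₁ x) ∧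
      ConvexOn ℝ Set.univ φ₁ ∧
      (∀ (x : EuclideanSpace ℝ (Fin n)) (l : ℝ), 0 < l → φ₂ (l • x) = l * φ₂ x) ∧
      ConvexOn ℝ Set.univ φ₂ ∧
      (∀ x, p x = φ₁ x - φ₂ x))
    ↔
    ∃ (I S : Type) (_ : Nonempty I) (_ : Nonempty S)
      (b : S → EuclideanSpace ℝ (Fin n)) (c : I → EuclideanSpace ℝ (Fin n)),
      Bornology.IsBounded (Set.range b) ∧ Bornology.IsBounded (Set.range c) ∧
      (∀ x : EuclideanSpace ℝ (Fin n),
        (p x = ⨅ i : I, ⨆ s : S, (inner ℝ (b s - c i) x : ℝ)) ∧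
        (p x = ⨆ s : S, ⨅ i : I, (inner ℝ (b s - c i) x : ℝ))) := by
  constructor
  · rintro ⟨φ₁, φ₂, hom₁, hconv₁, hom₂, hconv₂, hp⟩
    obtain ⟨v, hv, -⟩ := exists_mem_linearMinorants_inner_eq hom₁ hconv₁ 0
    obtain ⟨w, hw, -⟩ := exists_mem_linearMinorants_inner_eq hom₂ hconv₂ 0
    have : Nonempty (linearMinorants φ₁) := ⟨⟨v, hv⟩⟩
    have : Nonempty (linearMinorants φ₂) := ⟨⟨w, hw⟩⟩
    have hb := isBounded_linearMinorants hconv₁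
    have hc := isBounded_linearMinorants hconv₂
    rw [← Subtype.range_coe (s := linearMinorants φ₁)] at hb
    rw [← Subtype.range_coe (s := linearMinorants φ₂)] at hc
    refine ⟨_, _, inferInstance, inferInstance, _, _, hb, hc, fun x => ?_⟩
    rw [iInf_iSup_inner_sub hb hc, iSup_iInf_inner_sub hb hc,
      supportFun_linearMinorants hom₁ hconv₁, supportFun_linearMinorants hom₂ hconv₂]
    exact ⟨hp x, hp x⟩
  · rintro ⟨I, S, _, _, b, c, hb, hc, hp⟩
    refine ⟨supportFun b, supportFun c, fun x _ hl => supportFun_smul b hl x,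
      convexOn_supportFun hb, fun x _ hl => supportFun_smul c hl x, convexOn_supportFun hc,
      fun x => ?_⟩
    rw [(hp x).1, iInf_iSup_inner_sub hb hc]
end

section
/- If I and S are nonempty finite index sets and {a_{is} ∈ ℝⁿ : i∈I, s∈S} satisfies p(x) = min_{i∈I} max_{s∈S} ⟨a_{is},x⟩ = max_{s∈S} min_{i∈I} ⟨a_{is},x⟩ for all x ∈ ℝⁿ, then p is continuous, positively homogeneous, and piecewise linear: there is a finite covering of ℝⁿ by convex cones on each of which p coincides with a linear function. -/
/-!
For each `x`, the minimax identity for the finite matrix `(⟪a i s, x⟫)` forces a saddle point: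
an entry `(i, s)` that is the minimum of its column and the maximum of its row, and whose value is
then the common value `p x`. The set of `x` for which a fixed `(i, s)` is a saddle point is cut out
by finitely many homogeneous linear inequalities, hence is a convex cone, and on it `p = ⟪a i s, ·⟫`.
These `|I| · |S|` cones cover the space; positive homogeneity follows from linearity on each cone.
-/

open Set

section Minimax

variable {α I S : Type*}

def IsSaddlePoint [Preorder α] (M : I → S → α) (i : I) (s : S) : Prop :=
  (∀ i', M i s ≤ M i' s) ∧ ∀ s', M i s' ≤ M i s

variable [ConditionallyCompleteLinearOrder α] {M : I → S → α} {i : I} {s : S}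

theorem IsSaddlePoint.iInf_iSup_le [Finite I] (h : IsSaddlePoint M i s) : ⨅ i', ⨆ s', M i' s' ≤ M i s :=
  have : Nonempty S := ⟨s⟩
  have : Nonempty α := ⟨M i s⟩
  (ciInf_le (Finite.bddBelow_range _) i).trans (ciSup_le h.2)

theorem IsSaddlePoint.le_iSup_iInf [Finite S] (h : IsSaddlePoint M i s) : M i s ≤ ⨆ s', ⨅ i', M i' s' :=
  have : Nonempty I := ⟨i⟩
  have : Nonempty α := ⟨M i s⟩
  (le_ciInf h.1).trans (le_ciSup (f := fun s' => ⨅ i', M i' s') (Finite.bddAbove_range _) s)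

theorem IsSaddlePoint.iInf_iSup_eq [Finite I] [Finite S] (h : IsSaddlePoint M i s)
    (hM : ⨅ i', ⨆ s', M i' s' = ⨆ s', ⨅ i', M i' s') : ⨅ i', ⨆ s', M i' s' = M i s :=
  le_antisymm h.iInf_iSup_le (hM ▸ h.le_iSup_iInf)

/-- Take a row `i` minimizing the row maxima and a column `s` maximizing the column minima. -/
theorem exists_isSaddlePoint [Finite I] [Finite S] [Nonempty I] [Nonempty S]
    (hM : ⨅ i, ⨆ s, M i s = ⨆ s, ⨅ i, M i s) : ∃ i s, IsSaddlePoint M i s := by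
  obtain ⟨i, hi⟩ := exists_eq_ciInf_of_finite (f := fun i => ⨆ s, M i s)
  obtain ⟨s, hs⟩ := exists_eq_ciSup_of_finite (f := fun s => ⨅ i, M i s)
  have : Nonempty α := ⟨M i s⟩
  have row_le : ∀ s', M i s' ≤ ⨅ i, ⨆ s, M i s := fun s' =>
    (le_ciSup (Finite.bddAbove_range _) s').trans_eq hi
  have le_col : ∀ i', ⨅ i, ⨆ s, M i s ≤ M i' s := fun i' =>
    (hM.trans hs.symm).trans_le (ciInf_le (Finite.bddBelow_range _) i')
  exact ⟨i, s, fun i' => (row_le s).trans (le_col i'), fun s' => (row_le s').trans (le_col i)⟩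

end Minimax

section SaddleCone

variable {𝕜 E I S : Type*} [Field 𝕜] [LinearOrder 𝕜] [IsStrictOrderedRing 𝕜]
  [AddCommGroup E] [Module 𝕜 E]

def saddleCone (f : I → S → E →ₗ[𝕜] 𝕜) (i : I) (s : S) : ConvexCone 𝕜 E where
  carrier := {x | IsSaddlePoint (fun i s => f i s x) i s}
  smul_mem' c hc x hx := by
    simpa only [mem_ofPred_eq, IsSaddlePoint, map_smul, smul_eq_mul] using
      And.intro (fun i' => mul_le_mul_of_nonneg_left (hx.1 i') hc.le)
        (fun s' => mul_le_mul_of_nonneg_left (hx.2 s') hc.le)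
  add_mem' x hx y hy := by
    simpa only [mem_ofPred_eq, IsSaddlePoint, map_add] using
      And.intro (fun i' => add_le_add (hx.1 i') (hy.1 i')) (fun s' => add_le_add (hx.2 s') (hy.2 s'))

theorem mem_saddleCone {f : I → S → E →ₗ[𝕜] 𝕜} {i : I} {s : S} {x : E} :
    x ∈ saddleCone f i s ↔ IsSaddlePoint (fun i s => f i s x) i s :=
  Iff.rfl

end SaddleCone

section Continuity

variable {ι X α : Type*} [Fintype ι] [Nonempty ι] [TopologicalSpace X]
  [ConditionallyCompleteLinearOrder α] [TopologicalSpace α] [OrderClosedTopology α]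
  {f : ι → X → α}

theorem continuous_ciSup_apply (hf : ∀ i, Continuous (f i)) : Continuous fun x => ⨆ i, f i x := by
  simpa only [Finset.sup'_univ_eq_ciSup] using
    Continuous.finset_sup'_apply Finset.univ_nonempty fun i _ => hf i

theorem continuous_ciInf_apply (hf : ∀ i, Continuous (f i)) : Continuous fun x => ⨅ i, f i x := by
  simpa only [Finset.inf'_univ_eq_ciInf] using
    Continuous.finset_inf'_apply Finset.univ_nonempty fun i _ => hf i

end Continuity

theorem stmt_17 {n : ℕ} {I S : Type} [Fintype I] [Fintype S] [Nonempty I] [Nonempty S]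
    (a : I → S → EuclideanSpace ℝ (Fin n)) (p : EuclideanSpace ℝ (Fin n) → ℝ)
    (hrep : ∀ x : EuclideanSpace ℝ (Fin n),
      (p x = ⨅ i : I, ⨆ s : S, (inner ℝ (a i s) x : ℝ)) ∧
      (p x = ⨆ s : S, ⨅ i : I, (inner ℝ (a i s) x : ℝ))) :
    Continuous p ∧
    (∀ (x : EuclideanSpace ℝ (Fin n)) (l : ℝ), 0 < l → p (l • x) = l * p x) ∧
    ∃ (m : ℕ) (K : Fin m → Set (EuclideanSpace ℝ (Fin n))),
      (∀ j, Convex ℝ (K j)) ∧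
      (∀ j, ∀ x ∈ K j, ∀ l : ℝ, 0 < l → l • x ∈ K j) ∧
      (⋃ j, K j) = Set.univ ∧
      (∀ j, ∃ aj : EuclideanSpace ℝ (Fin n), ∀ x ∈ K j, p x = (inner ℝ aj x : ℝ)) := by
  let f : I → S → EuclideanSpace ℝ (Fin n) →ₗ[ℝ] ℝ := fun i s => innerₗ _ (a i s)
  have hlin : ∀ i s, ∀ x ∈ saddleCone f i s, p x = inner ℝ (a i s) x := fun i s x hx =>
    (hrep x).1.trans ((mem_saddleCone.1 hx).iInf_iSup_eq ((hrep x).1.symm.trans (hrep x).2))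
  have hcover : ∀ x, ∃ i s, x ∈ saddleCone f i s := fun x =>
    exists_isSaddlePoint ((hrep x).1.symm.trans (hrep x).2)
  let e := Fintype.equivFin (I × S)
  refine ⟨?_, ?_, Fintype.card (I × S), fun j => saddleCone f (e.symm j).1 (e.symm j).2,
    fun j => ConvexCone.convex _, fun j x hx l hl => ConvexCone.smul_mem _ hl hx, ?_,
    fun j => ⟨_, hlin _ _⟩⟩
  · rw [show p = _ from funext fun x => (hrep x).1]
    exact continuous_ciInf_apply fun i => continuous_ciSup_apply fun s =>
      continuous_const.inner continuous_id
  · intro x l hl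
    obtain ⟨i, s, hx⟩ := hcover x
    rw [hlin i s _ (ConvexCone.smul_mem _ hl hx), hlin i s x hx, real_inner_smul_right]
  · refine eq_univ_of_forall fun x => ?_
    obtain ⟨i, s, hx⟩ := hcover x
    exact mem_iUnion.2 ⟨e (i, s), by simpa only [Equiv.symm_apply_apply, SetLike.mem_coe] using hx⟩
end
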